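/- arXiv:2511.03849 — 2 statements merged into one kernel-verified Lean document; each statement's English description precedes it below -/
import Mathlib

section
/- Let Z be an n×n positive semidefinite symmetric real matrix with entries in [0,1] and all diagonal entries equal to 1, and let r_i = ∑_j Z_{ij} denote its row sums. Then tr(Z³) ≤ ∑_i r_i², and consequently √(n³/tr(Z³)) ≥ √(n³/∑_i r_i²); that is, VS₃(Z) ≥ D₃(Z, 1/n). -/
open Matrix BigOperators

theorem vendi_ge_lcr_q3 (n : ℕ) (Z : Matrix (Fin n) (Fin n) ℝ)
    (hpsd : Z.PosSemidef)
    (hrange : ∀ i j, 0 ≤ Z i j ∧ Z i j ≤ 1)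
    (hdiag : ∀ i, Z i i = 1) :
    ((Z * Z * Z).trace ≤ ∑ i, (∑ j, Z i j) ^ 2) ∧
    (Real.sqrt ((n : ℝ) ^ 3 / (Z * Z * Z).trace) ≥
      Real.sqrt ((n : ℝ) ^ 3 / ∑ i, (∑ j, Z i j) ^ 2)) := by
  have hsym : ∀ i j, Z j i = Z i j := by
    intro i j
    have := hpsd.1
    rw [Matrix.IsHermitian] at this
    conv_lhs => rw [← this]
    simp [Matrix.conjTranspose_apply]
  have htr : (Z * Z * Z).trace = ∑ i, ∑ k, ∑ j, Z i j * Z j k * Z k i := by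
    simp [Matrix.trace, Matrix.diag, Matrix.mul_apply, Finset.sum_mul]
  have hsum : (∑ i, (∑ j, Z i j) ^ 2) = ∑ i, ∑ k, ∑ j, Z i j * Z i k := by
    congr 1; ext i
    rw [sq, Finset.sum_mul_sum, Finset.sum_comm]
  have h1 : (Z * Z * Z).trace ≤ ∑ i, (∑ j, Z i j) ^ 2 := by
    rw [htr, hsum]
    apply Finset.sum_le_sum; intro i _
    apply Finset.sum_le_sum; intro j _
    apply Finset.sum_le_sum; intro k _
    have h0ik := (hrange i k).1
    have h0ji := (hrange j i).1
    calc Z i k * Z k j * Z j i ≤ Z i k * 1 * Z j i := by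
          apply mul_le_mul_of_nonneg_right _ h0ji
          exact mul_le_mul_of_nonneg_left (hrange k j).2 h0ik
      _ = Z i k * Z i j := by rw [mul_one, hsym j i]
  refine ⟨h1, ?_⟩
  rcases Nat.eq_zero_or_pos n with hn | hn
  · subst hn
    simp
  · have htrpos : 0 < (Z * Z * Z).trace := by
      rw [htr]
      have : (n : ℝ) ≤ ∑ i : Fin n, ∑ k, ∑ j, Z i j * Z j k * Z k i := by
        calc (n : ℝ) = ∑ i : Fin n, Z i i * Z i i * Z i i := by
              simp [hdiag]
          _ ≤ _ := by
              apply Finset.sum_le_sum; intro i _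
              have h2 : Z i i * Z i i * Z i i ≤ ∑ j, Z i j * Z j i * Z i i := by
                apply Finset.single_le_sum (f := fun j => Z i j * Z j i * Z i i)
                · intro j _
                  have := (hrange i j).1; have := (hrange j i).1; have := (hrange i i).1
                  positivity
                · exact Finset.mem_univ i
              refine h2.trans ?_
              apply Finset.single_le_sum (f := fun k => ∑ j, Z i j * Z j k * Z k i)
              · intro k _
                apply Finset.sum_nonneg; intro j _
                have := (hrange i j).1; have := (hrange j k).1; have := (hrange k i).1
                positivity
              · exact Finset.mem_univ i
      have hn' : (0:ℝ) < n := by exact_mod_cast hn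
      linarith
    apply Real.sqrt_le_sqrt
    apply div_le_div_of_nonneg_left _ htrpos h1
    positivity
end

section
/- Let Z be an n×n positive semidefinite symmetric real matrix with nonnegative entries and all diagonal entries equal to 1. Set T = ∑_{i,j} Z_{ij} and define the diagonal matrix W with W_{ii} = (∑_j Z_{ij})/T. Then the exponential of the von Neumann entropy of Z/n, i.e. VS₁(Z) = exp(−tr((Z/n) log(Z/n))), satisfies VS₁(Z) ≤ (T/n) · exp(−(1/n)∑_i log((∑_j Z_{ij})/n)). -/
open Matrix BigOperators

open Finset in
lemma key_entropy_ineq {n : ℕ} (μ w : Fin n → ℝ) (p : Fin n → Fin n → ℝ)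
    (hμ : ∀ k, 0 ≤ μ k) (hμsum : ∑ k, μ k = 1)
    (hw : ∀ i, 0 < w i) (hwsum : ∑ i, w i = 1)
    (hp : ∀ i k, 0 ≤ p i k)
    (hcol : ∀ k, ∑ i, p i k = 1) (hrow : ∀ i, ∑ k, p i k = 1) :
    -∑ k, μ k * Real.log (μ k) ≤ -∑ i, (∑ k, p i k * μ k) * Real.log (w i) := by
  set c : Fin n → ℝ := fun k => ∑ i, p i k * Real.log (w i) with hc
  have hterm : ∀ k, μ k * c k - μ k * Real.log (μ k) ≤ Real.exp (c k) - μ k := by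
    intro k
    rcases eq_or_lt_of_le (hμ k) with h0 | h0
    · rw [← h0]
      simp only [zero_mul, sub_zero, sub_self]
      positivity
    · have hlog : Real.log (Real.exp (c k) / μ k) ≤ Real.exp (c k) / μ k - 1 :=
        Real.log_le_sub_one_of_pos (by positivity)
      rw [Real.log_div (Real.exp_pos _).ne' h0.ne', Real.log_exp] at hlog
      have := mul_le_mul_of_nonneg_left hlog h0.le
      calc μ k * c k - μ k * Real.log (μ k) = μ k * (c k - Real.log (μ k)) := by ring
        _ ≤ μ k * (Real.exp (c k) / μ k - 1) := this
        _ = Real.exp (c k) - μ k := by field_simp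
  have hg : ∀ k, Real.exp (c k) ≤ ∑ i, p i k * w i := by
    intro k
    have hgm := Real.geom_mean_le_arith_mean_weighted Finset.univ (fun i => p i k) w
      (fun i _ => hp i k) (hcol k) (fun i _ => (hw i).le)
    calc Real.exp (c k) = ∏ i, (w i) ^ (p i k) := by
          rw [hc, Real.exp_sum]
          refine Finset.prod_congr rfl fun i _ => ?_
          rw [Real.rpow_def_of_pos (hw i), mul_comm]
      _ ≤ ∑ i, p i k * w i := hgm
  have hsum : ∑ k, (μ k * c k - μ k * Real.log (μ k)) ≤ 0 := by
    calc ∑ k, (μ k * c k - μ k * Real.log (μ k))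
        ≤ ∑ k, (Real.exp (c k) - μ k) := Finset.sum_le_sum fun k _ => hterm k
      _ = (∑ k, Real.exp (c k)) - 1 := by rw [Finset.sum_sub_distrib, hμsum]
      _ ≤ (∑ k, ∑ i, p i k * w i) - 1 :=
          sub_le_sub_right (Finset.sum_le_sum fun k _ => hg k) 1
      _ = 0 := by
          rw [Finset.sum_comm]
          have : ∀ i, ∑ k, p i k * w i = w i := by
            intro i
            rw [← Finset.sum_mul, hrow i, one_mul]
          simp only [this, hwsum, sub_self]
  have hswap : ∑ k, μ k * c k = ∑ i, (∑ k, p i k * μ k) * Real.log (w i) := by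
    simp only [hc, Finset.mul_sum, Finset.sum_mul]
    rw [Finset.sum_comm]
    exact Finset.sum_congr rfl fun i _ => Finset.sum_congr rfl fun k _ => by ring
  rw [Finset.sum_sub_distrib] at hsum
  linarith [hsum, hswap ▸ hsum]

theorem vendi1_le_T_over_n_mul_lcr1 (n : ℕ) (hn : 0 < n)
    (Z : Matrix (Fin n) (Fin n) ℝ)
    (hpsd : Z.PosSemidef)
    (hnn : ∀ i j, 0 ≤ Z i j)
    (hdiag : ∀ i, Z i i = 1)
    (hH : (((n : ℝ)⁻¹) • Z).IsHermitian) :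
    Real.exp (-∑ i, hH.eigenvalues i * Real.log (hH.eigenvalues i)) ≤
      ((∑ i, ∑ j, Z i j) / n) *
        Real.exp (-(1 / (n : ℝ)) * ∑ i, Real.log ((∑ j, Z i j) / n)) := by
  have hnR : (0:ℝ) < n := Nat.cast_pos.mpr hn
  set ρ : Matrix (Fin n) (Fin n) ℝ := ((n : ℝ)⁻¹) • Z with hρ
  set μ := hH.eigenvalues with hμdef
  set U : Matrix (Fin n) (Fin n) ℝ := (hH.eigenvectorUnitary : Matrix (Fin n) (Fin n) ℝ) with hU
  set p : Fin n → Fin n → ℝ := fun i k => U i k * U i k with hpdef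
  -- row sums of Z
  set r : Fin n → ℝ := fun i => ∑ j, Z i j with hr
  have hr1 : ∀ i, 1 ≤ r i := by
    intro i
    have : Z i i ≤ ∑ j, Z i j :=
      Finset.single_le_sum (fun j _ => hnn i j) (Finset.mem_univ i)
    rw [hdiag i] at this; exact this
  set T : ℝ := ∑ i, ∑ j, Z i j with hT
  have hTn : (n:ℝ) ≤ T := by
    calc (n:ℝ) = ∑ _i : Fin n, (1:ℝ) := by simp
      _ ≤ ∑ i, r i := Finset.sum_le_sum fun i _ => hr1 i
      _ = T := rfl
  have hTpos : (0:ℝ) < T := lt_of_lt_of_le hnR hTn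
  -- eigenvalues nonneg
  have hρpsd : ρ.PosSemidef := by
    refine Matrix.PosSemidef.of_dotProduct_mulVec_nonneg hH fun x => ?_
    have h0 := hpsd.dotProduct_mulVec_nonneg x
    have : star x ⬝ᵥ ρ *ᵥ x = (n:ℝ)⁻¹ * (star x ⬝ᵥ Z *ᵥ x) := by
      rw [hρ, smul_mulVec, dotProduct_smul, smul_eq_mul]
    rw [this]
    positivity
  have hμnn : ∀ k, 0 ≤ μ k := fun k => hρpsd.eigenvalues_nonneg k
  -- diagonal entries of ρ via spectral theorem
  have hspec := hH.spectral_theorem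
  rw [Unitary.conjStarAlgAut_apply] at hspec
  have hdiagρ : ∀ i, ρ i i = (n:ℝ)⁻¹ := by
    intro i
    simp [hρ, Matrix.smul_apply, hdiag i]
  have hentry : ∀ i, ∑ k, p i k * μ k = (n:ℝ)⁻¹ := by
    intro i
    have := congrArg (fun M => M i i) hspec
    simp only [Matrix.mul_apply, Matrix.diagonal_apply, Function.comp_apply,
      Matrix.star_apply, star_trivial] at this
    rw [hdiagρ i] at this
    simp only [RCLike.ofReal_real_eq_id, id_eq, mul_ite, mul_zero,
      Finset.sum_ite_eq', Finset.mem_univ, if_true] at this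
    rw [this]
    exact Finset.sum_congr rfl fun k _ => by ring
  -- double stochasticity
  have hUU : U * Uᵀ = 1 := by
    have := (Matrix.mem_unitaryGroup_iff).mp hH.eigenvectorUnitary.2
    simpa [Matrix.star_eq_conjTranspose] using this
  have hUU' : Uᵀ * U = 1 := by
    have := (Matrix.mem_unitaryGroup_iff').mp hH.eigenvectorUnitary.2
    simpa [Matrix.star_eq_conjTranspose] using this
  have hrow : ∀ i, ∑ k, p i k = 1 := by
    intro i
    have := congrArg (fun M => M i i) hUU
    simpa [Matrix.mul_apply, Matrix.one_apply, hpdef] using this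
  have hcol : ∀ k, ∑ i, p i k = 1 := by
    intro k
    have := congrArg (fun M => M k k) hUU'
    simpa [Matrix.mul_apply, Matrix.one_apply, hpdef] using this
  -- sum of eigenvalues = 1
  have hμsum : ∑ k, μ k = 1 := by
    have : ∑ i, ∑ k, p i k * μ k = ∑ i : Fin n, (n:ℝ)⁻¹ :=
      Finset.sum_congr rfl fun i _ => hentry i
    rw [Finset.sum_comm] at this
    have h2 : ∑ k, μ k * (∑ i, p i k) = (1:ℝ) := by
      have hrhs : ∑ _i : Fin n, (n:ℝ)⁻¹ = 1 := by
        simp [Finset.sum_const]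
        field_simp
      rw [← hrhs, ← this]
      refine Finset.sum_congr rfl fun k _ => ?_
      rw [Finset.mul_sum]
      exact Finset.sum_congr rfl fun i _ => by ring
    simpa [hcol] using h2
  -- apply key inequality with w i = r i / T
  set w : Fin n → ℝ := fun i => r i / T with hw
  have hwpos : ∀ i, 0 < w i := fun i => div_pos (lt_of_lt_of_le one_pos (hr1 i)) hTpos
  have hwsum : ∑ i, w i = 1 := by
    rw [hw]
    simp only [← Finset.sum_div]
    exact div_self hTpos.ne'
  have hkey := key_entropy_ineq μ w p hμnn hμsum hwpos hwsum
    (fun i k => mul_self_nonneg _) hcol hrow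
  simp only [hentry] at hkey
  -- convert RHS
  have hrhs : -∑ i, (n:ℝ)⁻¹ * Real.log (w i)
      = Real.log (T / n) + (-(1 / (n : ℝ)) * ∑ i, Real.log (r i / n)) := by
    have hlogw : ∀ i, Real.log (w i) = Real.log (r i / n) - Real.log (T / n) := by
      intro i
      rw [hw]
      have hri : r i ≠ 0 := (lt_of_lt_of_le one_pos (hr1 i)).ne'
      rw [Real.log_div hri hTpos.ne',
        Real.log_div hri hnR.ne',
        Real.log_div hTpos.ne' hnR.ne']
      ring
    rw [Finset.sum_congr rfl fun i _ => by rw [hlogw i]]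
    simp only [mul_sub, Finset.sum_sub_distrib, ← Finset.mul_sum, Finset.sum_const,
      Finset.card_univ, Fintype.card_fin, nsmul_eq_mul]
    field_simp
    ring
  rw [hrhs] at hkey
  calc Real.exp (-∑ k, μ k * Real.log (μ k))
      ≤ Real.exp (Real.log (T / n) + (-(1 / (n : ℝ)) * ∑ i, Real.log (r i / n))) :=
        Real.exp_le_exp.mpr hkey
    _ = (T / n) * Real.exp (-(1 / (n : ℝ)) * ∑ i, Real.log (r i / n)) := by
        rw [Real.exp_add, Real.exp_log (by positivity)]
end
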